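/- In the quotient ring $A = \mathbb{Z}[z_{12},z_{20},z_{30}]/(2z_{30},\, 3z_{20}^2,\, 5z_{12}^4,\, z_{12}^5 + z_{20}^3 + z_{30}^2)$, the following hold: $\overline{z_{12}}^5 = -\overline{z_{20}}^3 - \overline{z_{30}}^2$, the element $\overline{z_{12}}^3\,\overline{z_{20}}$ generates a subgroup isomorphic to $\mathbb{Z}$ (it has infinite additive order), and $\overline{z_{12}}^4\,\overline{z_{20}}$ has additive order exactly $5$. -/

import Mathlib

/- For an ideal `N` of the coefficients and a monomial `n`, the polynomials whose coefficients at
all divisors of `n` lie in `N` form an ideal, since a coefficient of a product at `m` only involves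
coefficients of the factors at divisors of `m`. For `n = z₁₂³ z₂₀, N = 0` and for
`n = z₁₂⁴ z₂₀, N = (5)` this ideal contains the generators of `I19`: none of their monomials divides
`n`, except `z₁₂⁴`, whose coefficient is `5`. Reading off the coefficient at `n` shows that no
positive multiple of `z̄₁₂³ z̄₂₀` vanishes and that `z̄₁₂⁴ z̄₂₀ ≠ 0`, while `5 z₁₂⁴ z₂₀ ∈ I19`. -/

open MvPolynomial

/-- The ideal `(2z₃₀, 3z₂₀², 5z₁₂⁴, z₁₂⁵ + z₂₀³ + z₃₀²)` in `ℤ[z₁₂,z₂₀,z₃₀]`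
(`z₁₂ = X 0`, `z₂₀ = X 1`, `z₃₀ = X 2`). -/
noncomputable def I19 : Ideal (MvPolynomial (Fin 3) ℤ) :=
  Ideal.span {2 * X (2 : Fin 3), 3 * (X (1 : Fin 3)) ^ 2, 5 * (X (0 : Fin 3)) ^ 4,
    (X (0 : Fin 3)) ^ 5 + (X (1 : Fin 3)) ^ 3 + (X (2 : Fin 3)) ^ 2}

namespace MvPolynomial

variable {σ R : Type*} [CommRing R]

def coeffLEIdeal (N : Ideal R) (n : σ →₀ ℕ) : Ideal (MvPolynomial σ R) where
  carrier := {p | ∀ m ≤ n, coeff m p ∈ N}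
  zero_mem' _ _ := by simp
  add_mem' hp hq m hm := by simpa only [coeff_add] using N.add_mem (hp m hm) (hq m hm)
  smul_mem' a p hp m hm := by
    classical
    rw [smul_eq_mul, coeff_mul]
    refine N.sum_mem fun ij hij => N.mul_mem_left _ (hp _ ?_)
    rw [Finset.HasAntidiagonal.mem_antidiagonal] at hij
    exact le_add_self.trans (hij ▸ hm)

theorem coeff_mem_of_mem_coeffLEIdeal {N : Ideal R} {n : σ →₀ ℕ} {p : MvPolynomial σ R}
    (hp : p ∈ coeffLEIdeal N n) : coeff n p ∈ N :=
  hp n le_rfl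

theorem monomial_mem_coeffLEIdeal {N : Ideal R} {n s : σ →₀ ℕ} {c : R} (h : s ≤ n → c ∈ N) :
    monomial s c ∈ coeffLEIdeal N n := by
  classical
  intro m hm
  rw [coeff_monomial]
  split_ifs with hsm
  · exact h (hsm ▸ hm)
  · exact N.zero_mem

end MvPolynomial

theorem I19_le_coeffLEIdeal {N : Ideal ℤ} {n : Fin 3 →₀ ℕ} (h2 : n 2 = 0) (h1 : n 1 ≤ 1)
    (h0 : n 0 ≤ 4) (h5 : 4 ≤ n 0 → (5 : ℤ) ∈ N) : I19 ≤ coeffLEIdeal N n := by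
  have hX : ∀ (i : Fin 3) (k : ℕ) (c : ℤ), (k ≤ n i → c ∈ N) →
      (C c * X i ^ k : MvPolynomial (Fin 3) ℤ) ∈ coeffLEIdeal N n :=
    fun i k c h => by
      rw [C_mul_X_pow_eq_monomial]
      exact monomial_mem_coeffLEIdeal fun hle => h (Finsupp.single_le_iff.mp hle)
  simp only [I19, Ideal.span_le, Set.insert_subset_iff, Set.singleton_subset_iff, SetLike.mem_coe]
  refine ⟨?_, ?_, ?_, add_mem (add_mem ?_ ?_) ?_⟩
  · simpa using hX 2 1 2 (by omega)
  · simpa using hX 1 2 3 (by omega)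
  · simpa using hX 0 4 5 h5
  · simpa using hX 0 5 1 (by omega)
  · simpa using hX 1 3 1 (by omega)
  · simpa using hX 2 2 1 (by omega)

/-- In `A = ℤ[z₁₂,z₂₀,z₃₀]/(2z₃₀, 3z₂₀², 5z₁₂⁴, z₁₂⁵+z₂₀³+z₃₀²)`:
`z̄₁₂⁵ = -z̄₂₀³ - z̄₃₀²`; the element `z̄₁₂³ z̄₂₀` has infinite additive order
(i.e. generates a subgroup isomorphic to `ℤ`); and `z̄₁₂⁴ z̄₂₀` has additive
order exactly `5`. -/
theorem stmt19 :
    ((Ideal.Quotient.mk I19 (X (0 : Fin 3))) ^ 5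
      = -(Ideal.Quotient.mk I19 (X (1 : Fin 3))) ^ 3
        - (Ideal.Quotient.mk I19 (X (2 : Fin 3))) ^ 2) ∧
    (addOrderOf (Ideal.Quotient.mk I19 ((X (0 : Fin 3)) ^ 3 * X (1 : Fin 3))) = 0) ∧
    (addOrderOf (Ideal.Quotient.mk I19 ((X (0 : Fin 3)) ^ 4 * X (1 : Fin 3))) = 5) := by
  have hmono (a : ℕ) : (X 0 ^ a * X 1 : MvPolynomial (Fin 3) ℤ) =
      monomial (Finsupp.single 0 a + Finsupp.single 1 1) 1 :=
    monomial_single_add.symm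
  refine ⟨?_, ?_, ?_⟩
  · have hrel : Ideal.Quotient.mk I19 (X 0 ^ 5 + X 1 ^ 3 + X 2 ^ 2) = 0 :=
      Ideal.Quotient.eq_zero_iff_mem.mpr (Ideal.subset_span (by simp))
    simp only [map_add, map_pow] at hrel
    linear_combination hrel
  · refine addOrderOf_eq_zero_iff'.mpr fun k hk hzero => hk.ne' ?_
    rw [← map_nsmul, Ideal.Quotient.eq_zero_iff_mem] at hzero
    have := coeff_mem_of_mem_coeffLEIdeal <| I19_le_coeffLEIdeal (N := ⊥)
      (n := Finsupp.single 0 3 + Finsupp.single 1 1) (by simp) (by simp) (by simp) (by simp) hzero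
    rw [hmono, smul_monomial, coeff_monomial, if_pos rfl] at this
    simpa using this
  · have h5 : (5 : ℕ) • Ideal.Quotient.mk I19 (X 0 ^ 4 * X 1) = 0 := by
      rw [← map_nsmul, Ideal.Quotient.eq_zero_iff_mem, nsmul_eq_mul, Nat.cast_ofNat, ← mul_assoc]
      exact I19.mul_mem_right _ (Ideal.subset_span (by simp))
    have hne : Ideal.Quotient.mk I19 (X 0 ^ 4 * X 1) ≠ 0 := fun h => by
      have := coeff_mem_of_mem_coeffLEIdeal <| I19_le_coeffLEIdeal (N := Ideal.span {5})
        (n := Finsupp.single 0 4 + Finsupp.single 1 1) (by simp) (by simp) (by simp)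
        (fun _ => Ideal.mem_span_singleton_self 5) (Ideal.Quotient.eq_zero_iff_mem.mp h)
      simp [hmono, Ideal.mem_span_singleton] at this
    have : Fact (Nat.Prime 5) := ⟨by norm_num⟩
    exact addOrderOf_eq_prime h5 hne
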